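/- For a unit vector ψ = (1/√3)(e^{iφ₊}|1⟩ + |0⟩ + e^{iφ₋}|−1⟩) of a spin-1 system, ψ is unbiased in the eigenbases of J_x, J_y and J_z simultaneously if and only if (φ₊, φ₋) ∈ {(π/4, 3π/4), (−π/4, −3π/4), (3π/4, π/4), (−3π/4, −π/4)} modulo 2π; in particular there exist exactly four perfect quantum protractors of this form for spin 1. -/

import Mathlib

open Complex Real BigOperators Matrix

noncomputable section

def J1x : Matrix (Fin 3) (Fin 3) ℂ :=
  (1 / (Real.sqrt 2 : ℂ)) • !![0, 1, 0; 1, 0, 1; 0, 1, 0]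
def J1y : Matrix (Fin 3) (Fin 3) ℂ :=
  (Complex.I / (Real.sqrt 2 : ℂ)) • !![0, -1, 0; 1, 0, -1; 0, 1, 0]
def J1z : Matrix (Fin 3) (Fin 3) ℂ := !![1, 0, 0; 0, 0, 0; 0, 0, -1]

/-- The spin-1 state with phases `φ₊, φ₋`. -/
def ψspin1 (φp φm : ℝ) : Fin 3 → ℂ :=
  fun i => (1 / (Real.sqrt 3 : ℂ)) *
    ![Complex.exp (Complex.I * φp), 1, Complex.exp (Complex.I * φm)] i

/-!
Each of `J_x, J_y, J_z` is `U * diagonal ![1, 0, -1] * Uᴴ` for a unitary `U` whose columns are its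
eigenvectors, so `ψ` is unbiased in its eigenbasis iff every coordinate of `Uᴴ ψ` has squared
modulus `1/3`. For `J_z` (where `U = 1`) this holds for all phases. Writing `e^{iφ±} = c± + i s±`,
the conditions for `J_x` and `J_y` are six quadratic equations; subtracting them in pairs gives
`c₋ = -c₊` and `s₋ = s₊`, after which they reduce to `s₊² = 1/2`, i.e. `c₊, s₊ ∈ {±√2/2}`.
-/

section Unbiased

variable {n : Type*} [Fintype n]

-- When `A` has simple spectrum, its unit eigenvectors are, up to phase, the vectors of its
-- eigenbasis, so this says that `ψ` is unbiased in that basis.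
def IsUnbiasedIn (A : Matrix n n ℂ) (ψ : n → ℂ) : Prop :=
  ∀ (t : ℂ) (v : n → ℂ), A *ᵥ v = t • v → ∑ i, ‖v i‖ ^ 2 = 1 →
    ‖∑ i, star (v i) * ψ i‖ ^ 2 = 1 / Fintype.card n

lemma sum_norm_sq_eq_dotProduct (v : n → ℂ) :
    ((∑ i, ‖v i‖ ^ 2 : ℝ) : ℂ) = star v ⬝ᵥ v := by
  simp [dotProduct, Complex.conj_mul']

variable [DecidableEq n] {U : Matrix n n ℂ}

lemma dotProduct_star_mulVec_of_mem_unitaryGroup (hU : U ∈ unitaryGroup n ℂ) (v w : n → ℂ) :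
    star (star U *ᵥ v) ⬝ᵥ (star U *ᵥ w) = star v ⬝ᵥ w := by
  rw [star_mulVec, dotProduct_mulVec, vecMul_vecMul, ← star_eq_conjTranspose, star_star,
    mem_unitaryGroup_iff.mp hU, vecMul_one]

lemma sum_norm_sq_star_mulVec_of_mem_unitaryGroup (hU : U ∈ unitaryGroup n ℂ) (v : n → ℂ) :
    ∑ i, ‖(star U *ᵥ v) i‖ ^ 2 = ∑ i, ‖v i‖ ^ 2 := by
  exact_mod_cast (sum_norm_sq_eq_dotProduct _).trans
    ((dotProduct_star_mulVec_of_mem_unitaryGroup hU v v).trans (sum_norm_sq_eq_dotProduct v).symm)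

lemma isUnbiasedIn_conj_iff (hU : U ∈ unitaryGroup n ℂ) (D : Matrix n n ℂ) (ψ : n → ℂ) :
    IsUnbiasedIn (U * D * star U) ψ ↔ IsUnbiasedIn D (star U *ᵥ ψ) := by
  have hUU : star U * U = 1 := mem_unitaryGroup_iff'.mp hU
  have hUU' : U * star U = 1 := mem_unitaryGroup_iff.mp hU
  have hsurj : Function.Surjective (star U *ᵥ ·) := fun w => ⟨U *ᵥ w, by
    simp [mulVec_mulVec, hUU]⟩
  have heig (t : ℂ) (v : n → ℂ) :
      (U * D * star U) *ᵥ v = t • v ↔ D *ᵥ (star U *ᵥ v) = t • (star U *ᵥ v) := by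
    constructor
    · intro h
      simpa [mulVec_mulVec, ← Matrix.mul_assoc, hUU, mulVec_smul] using congrArg (star U *ᵥ ·) h
    · intro h
      simpa [mulVec_mulVec, ← Matrix.mul_assoc, hUU', mulVec_smul] using congrArg (U *ᵥ ·) h
  have hoverlap (v : n → ℂ) :
      ∑ i, star ((star U *ᵥ v) i) * (star U *ᵥ ψ) i = ∑ i, star (v i) * ψ i :=
    dotProduct_star_mulVec_of_mem_unitaryGroup hU v ψ
  unfold IsUnbiasedIn
  refine forall_congr' fun t => (hsurj.forall.trans (forall_congr' fun v => ?_)).symm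
  simp only [heig, sum_norm_sq_star_mulVec_of_mem_unitaryGroup hU, hoverlap]

lemma isUnbiasedIn_diagonal_iff {d : n → ℂ} (hd : Function.Injective d) (w : n → ℂ) :
    IsUnbiasedIn (diagonal d) w ↔ ∀ i, ‖w i‖ ^ 2 = 1 / Fintype.card n := by
  constructor
  · intro h i
    simpa [Pi.single_apply] using
      h (d i) (Pi.single i 1)
        (by ext j; simp [Pi.single_apply])
        (by simp [Pi.single_apply, apply_ite (fun z : ℂ => ‖z‖ ^ 2)])
  · intro h t v hv hn
    obtain ⟨i, hi⟩ : ∃ i, v i ≠ 0 := by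
      by_contra! hv0
      simp [hv0] at hn
    have hsupp : ∀ j ≠ i, v j = 0 := by
      intro j hj
      have hvj := congrFun hv j
      have hvi := congrFun hv i
      simp only [mulVec_diagonal, Pi.smul_apply, smul_eq_mul] at hvj hvi
      rw [← mul_right_cancel₀ hi hvi] at hvj
      exact (mul_eq_zero.mp (by linear_combination hvj : (d j - d i) * v j = 0)).resolve_left
        (sub_ne_zero.mpr (hd.ne hj))
    rw [Finset.sum_eq_single_of_mem i (Finset.mem_univ i) fun j _ hj => by simp [hsupp j hj]]
      at hn ⊢
    rw [norm_mul, mul_pow, norm_star, hn, one_mul, h]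

end Unbiased

lemma ofReal_sqrt_two_sq : ((√2 : ℝ) : ℂ) ^ 2 = 2 := by
  rw [← Complex.ofReal_pow, Real.sq_sqrt zero_le_two]; norm_num

-- The columns of `J1xEigenbasis` and `J1yEigenbasis` are unit eigenvectors of `J1x` and `J1y`
-- for the eigenvalues `1, 0, -1`, in this order.
def J1xEigenbasis : Matrix (Fin 3) (Fin 3) ℂ :=
  !![1 / 2, √2 / 2, 1 / 2;
     √2 / 2, 0, -(√2 / 2);
     1 / 2, -(√2 / 2), 1 / 2]

def J1yEigenbasis : Matrix (Fin 3) (Fin 3) ℂ :=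
  !![1 / 2, √2 / 2, 1 / 2;
     I * √2 / 2, 0, -(I * √2 / 2);
     -(1 / 2), √2 / 2, -(1 / 2)]

lemma J1z_eq_diagonal : J1z = diagonal ![1, 0, -1] := by
  ext i j; fin_cases i <;> fin_cases j <;> rfl

lemma injective_one_zero_neg_one : Function.Injective (![1, 0, -1] : Fin 3 → ℂ) := by
  intro i j h; fin_cases i <;> fin_cases j <;> first | rfl | norm_num at h

lemma J1xEigenbasis_mem_unitaryGroup : J1xEigenbasis ∈ unitaryGroup (Fin 3) ℂ := by
  rw [mem_unitaryGroup_iff]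
  ext i j; fin_cases i <;> fin_cases j <;>
    simp [J1xEigenbasis, Matrix.mul_apply, Fin.sum_univ_three, star_eq_conjTranspose, map_ofNat] <;>
    ring_nf <;> simp [ofReal_sqrt_two_sq] <;> norm_num

lemma J1yEigenbasis_mem_unitaryGroup : J1yEigenbasis ∈ unitaryGroup (Fin 3) ℂ := by
  rw [mem_unitaryGroup_iff]
  ext i j; fin_cases i <;> fin_cases j <;>
    simp [J1yEigenbasis, Matrix.mul_apply, Fin.sum_univ_three, star_eq_conjTranspose, map_ofNat] <;>
    ring_nf <;> simp [ofReal_sqrt_two_sq] <;> norm_num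

lemma J1x_eq_conj : J1x = J1xEigenbasis * J1z * star J1xEigenbasis := by
  ext i j; fin_cases i <;> fin_cases j <;>
    simp [J1x, J1z, J1xEigenbasis, Matrix.mul_apply, Fin.sum_univ_three, star_eq_conjTranspose,
      map_ofNat] <;>
    field_simp <;> ring_nf <;> simp [ofReal_sqrt_two_sq] <;> norm_num

lemma J1y_eq_conj : J1y = J1yEigenbasis * J1z * star J1yEigenbasis := by
  ext i j; fin_cases i <;> fin_cases j <;>
    simp [J1y, J1z, J1yEigenbasis, Matrix.mul_apply, Fin.sum_univ_three, star_eq_conjTranspose,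
      map_ofNat] <;>
    field_simp <;> ring_nf <;> simp [ofReal_sqrt_two_sq] <;> norm_num

lemma norm_sq_star_J1xEigenbasis_mulVec_ψspin1 (φp φm : ℝ) :
    ‖(star J1xEigenbasis *ᵥ ψspin1 φp φm) 0‖ ^ 2 =
      ((Real.cos φp + Real.cos φm + √2) ^ 2 + (Real.sin φp + Real.sin φm) ^ 2) / 12 ∧
    ‖(star J1xEigenbasis *ᵥ ψspin1 φp φm) 1‖ ^ 2 =
      ((Real.cos φp - Real.cos φm) ^ 2 + (Real.sin φp - Real.sin φm) ^ 2) / 6 ∧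
    ‖(star J1xEigenbasis *ᵥ ψspin1 φp φm) 2‖ ^ 2 =
      ((Real.cos φp + Real.cos φm - √2) ^ 2 + (Real.sin φp + Real.sin φm) ^ 2) / 12 := by
  refine ⟨?_, ?_, ?_⟩ <;>
  simp [J1xEigenbasis, ψspin1, mulVec, dotProduct, Fin.sum_univ_three,
    Complex.sq_norm, Complex.normSq_apply, Complex.exp_re, Complex.exp_im, map_ofNat] <;>
  ring_nf <;> simp [Real.sq_sqrt] <;> ring

lemma norm_sq_star_J1yEigenbasis_mulVec_ψspin1 (φp φm : ℝ) :
    ‖(star J1yEigenbasis *ᵥ ψspin1 φp φm) 0‖ ^ 2 =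
      ((Real.cos φp - Real.cos φm) ^ 2 + (Real.sin φp - Real.sin φm - √2) ^ 2) / 12 ∧
    ‖(star J1yEigenbasis *ᵥ ψspin1 φp φm) 1‖ ^ 2 =
      ((Real.cos φp + Real.cos φm) ^ 2 + (Real.sin φp + Real.sin φm) ^ 2) / 6 ∧
    ‖(star J1yEigenbasis *ᵥ ψspin1 φp φm) 2‖ ^ 2 =
      ((Real.cos φp - Real.cos φm) ^ 2 + (Real.sin φp - Real.sin φm + √2) ^ 2) / 12 := by
  refine ⟨?_, ?_, ?_⟩ <;>
  simp [J1yEigenbasis, ψspin1, mulVec, dotProduct, Fin.sum_univ_three,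
    Complex.sq_norm, Complex.normSq_apply, Complex.exp_re, Complex.exp_im, map_ofNat] <;>
  ring_nf <;> simp [Real.sq_sqrt] <;> ring

lemma isUnbiasedIn_J1x_ψspin1_iff (φp φm : ℝ) : IsUnbiasedIn J1x (ψspin1 φp φm) ↔
    (Real.cos φp + Real.cos φm + √2) ^ 2 + (Real.sin φp + Real.sin φm) ^ 2 = 4 ∧
    (Real.cos φp - Real.cos φm) ^ 2 + (Real.sin φp - Real.sin φm) ^ 2 = 2 ∧
    (Real.cos φp + Real.cos φm - √2) ^ 2 + (Real.sin φp + Real.sin φm) ^ 2 = 4 := by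
  obtain ⟨h0, h1, h2⟩ := norm_sq_star_J1xEigenbasis_mulVec_ψspin1 φp φm
  rw [J1x_eq_conj, J1z_eq_diagonal, isUnbiasedIn_conj_iff J1xEigenbasis_mem_unitaryGroup,
    isUnbiasedIn_diagonal_iff injective_one_zero_neg_one]
  simp only [Fin.forall_fin_succ, IsEmpty.forall_iff, and_true, Fin.succ_zero_eq_one,
    Fin.succ_one_eq_two, Fintype.card_fin, h0, h1, h2]
  refine and_congr ?_ (and_congr ?_ ?_) <;> constructor <;> intro h <;> linarith

lemma isUnbiasedIn_J1y_ψspin1_iff (φp φm : ℝ) : IsUnbiasedIn J1y (ψspin1 φp φm) ↔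
    (Real.cos φp - Real.cos φm) ^ 2 + (Real.sin φp - Real.sin φm - √2) ^ 2 = 4 ∧
    (Real.cos φp + Real.cos φm) ^ 2 + (Real.sin φp + Real.sin φm) ^ 2 = 2 ∧
    (Real.cos φp - Real.cos φm) ^ 2 + (Real.sin φp - Real.sin φm + √2) ^ 2 = 4 := by
  obtain ⟨h0, h1, h2⟩ := norm_sq_star_J1yEigenbasis_mulVec_ψspin1 φp φm
  rw [J1y_eq_conj, J1z_eq_diagonal, isUnbiasedIn_conj_iff J1yEigenbasis_mem_unitaryGroup,
    isUnbiasedIn_diagonal_iff injective_one_zero_neg_one]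
  simp only [Fin.forall_fin_succ, IsEmpty.forall_iff, and_true, Fin.succ_zero_eq_one,
    Fin.succ_one_eq_two, Fintype.card_fin, h0, h1, h2]
  refine and_congr ?_ (and_congr ?_ ?_) <;> constructor <;> intro h <;> linarith

lemma isUnbiasedIn_J1z_ψspin1 (φp φm : ℝ) : IsUnbiasedIn J1z (ψspin1 φp φm) := by
  rw [J1z_eq_diagonal, isUnbiasedIn_diagonal_iff injective_one_zero_neg_one]
  intro i
  fin_cases i <;> simp [ψspin1, mul_comm Complex.I, Complex.norm_exp_ofReal_mul_I]

lemma spin_one_unbiasedness_equations_iff {c₁ s₁ c₂ s₂ r : ℝ} (h₁ : c₁ ^ 2 + s₁ ^ 2 = 1)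
    (hr : r ^ 2 = 2) :
    ((c₁ + c₂ + r) ^ 2 + (s₁ + s₂) ^ 2 = 4 ∧ (c₁ - c₂) ^ 2 + (s₁ - s₂) ^ 2 = 2 ∧
      (c₁ + c₂ - r) ^ 2 + (s₁ + s₂) ^ 2 = 4) ∧
    ((c₁ - c₂) ^ 2 + (s₁ - s₂ - r) ^ 2 = 4 ∧ (c₁ + c₂) ^ 2 + (s₁ + s₂) ^ 2 = 2 ∧
      (c₁ - c₂) ^ 2 + (s₁ - s₂ + r) ^ 2 = 4) ↔
    c₂ = -c₁ ∧ s₂ = s₁ ∧ s₁ ^ 2 = 1 / 2 := by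
  have hr0 : r ≠ 0 := by rintro rfl; norm_num at hr
  constructor
  · rintro ⟨⟨hxp, -, hxm⟩, ⟨hyp, hy0, hym⟩⟩
    have hc : c₂ = -c₁ := by
      have : r * (c₁ + c₂) = 0 := by linear_combination (hxp - hxm) / 4
      linear_combination (mul_eq_zero.mp this).resolve_left hr0
    have hs : s₂ = s₁ := by
      have : r * (s₁ - s₂) = 0 := by linear_combination (hym - hyp) / 4
      linear_combination -(mul_eq_zero.mp this).resolve_left hr0
    subst hc hs
    exact ⟨rfl, rfl, by linear_combination hy0 / 4⟩
  · rintro ⟨rfl, rfl, hs⟩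
    exact ⟨⟨by linear_combination hr + 4 * hs, by linear_combination 4 * h₁ - 4 * hs,
      by linear_combination hr + 4 * hs⟩, ⟨by linear_combination 4 * h₁ - 4 * hs + hr,
      by linear_combination 4 * hs, by linear_combination 4 * h₁ - 4 * hs + hr⟩⟩

lemma exists_int_eq_add_two_pi_mul_iff {x y : ℝ} :
    (∃ k : ℤ, x = y + 2 * π * k) ↔ Real.cos x = Real.cos y ∧ Real.sin x = Real.sin y := by
  simp_rw [← sub_eq_iff_eq_add', ← Real.Angle.angle_eq_iff_two_pi_dvd_sub]
  refine ⟨fun h => ⟨?_, ?_⟩, fun h => Real.Angle.cos_sin_inj h.1 h.2⟩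
  · simpa using congrArg Real.Angle.cos h
  · simpa using congrArg Real.Angle.sin h

lemma cos_three_pi_div_four : Real.cos (3 * π / 4) = -(√2 / 2) := by
  rw [show 3 * π / 4 = π - π / 4 by ring, Real.cos_pi_sub, Real.cos_pi_div_four]

lemma sin_three_pi_div_four : Real.sin (3 * π / 4) = √2 / 2 := by
  rw [show 3 * π / 4 = π - π / 4 by ring, Real.sin_pi_sub, Real.sin_pi_div_four]

lemma cos_eq_neg_cos_and_sin_eq_sin_and_sin_sq_eq_half_iff (φp φm : ℝ) :
    (Real.cos φm = -Real.cos φp ∧ Real.sin φm = Real.sin φp ∧ Real.sin φp ^ 2 = 1 / 2) ↔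
    (∃ a b : ℤ,
      (φp = Real.pi / 4 + 2 * Real.pi * a ∧ φm = 3 * Real.pi / 4 + 2 * Real.pi * b) ∨
      (φp = -(Real.pi / 4) + 2 * Real.pi * a ∧ φm = -(3 * Real.pi / 4) + 2 * Real.pi * b) ∨
      (φp = 3 * Real.pi / 4 + 2 * Real.pi * a ∧ φm = Real.pi / 4 + 2 * Real.pi * b) ∨
      (φp = -(3 * Real.pi / 4) + 2 * Real.pi * a ∧ φm = -(Real.pi / 4) + 2 * Real.pi * b)) := by
  simp only [exists_or, exists_and_left, exists_and_right, exists_int_eq_add_two_pi_mul_iff,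
    Real.cos_neg, Real.sin_neg, Real.cos_pi_div_four, Real.sin_pi_div_four, cos_three_pi_div_four,
    sin_three_pi_div_four]
  have hr : (√2 / 2) ^ 2 = 1 / 2 := by rw [div_pow, Real.sq_sqrt zero_le_two]; norm_num
  constructor
  · rintro ⟨hcm, hsm, hsp⟩
    have hcp : Real.cos φp ^ 2 = (√2 / 2) ^ 2 := by
      linear_combination Real.cos_sq_add_sin_sq φp - hsp - hr
    rcases sq_eq_sq_iff_eq_or_eq_neg.1 hcp with hcp | hcp <;>
    rcases sq_eq_sq_iff_eq_or_eq_neg.1 (hsp.trans hr.symm) with hsp | hsp <;>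
    simp [hcm, hsm, hcp, hsp]
  · rintro (⟨⟨hcp, hsp⟩, hcm, hsm⟩ | ⟨⟨hcp, hsp⟩, hcm, hsm⟩ | ⟨⟨hcp, hsp⟩, hcm, hsm⟩ |
      ⟨⟨hcp, hsp⟩, hcm, hsm⟩) <;>
    simp [hcm, hsm, hcp, hsp, hr]

/-- The state `(1/√3)(e^{iφ₊}|1⟩ + |0⟩ + e^{iφ₋}|−1⟩)` is unbiased in the eigenbases of
`J_x, J_y, J_z` simultaneously iff `(φ₊, φ₋)` is, modulo `2π`, one of the four pairs
`(π/4, 3π/4), (−π/4, −3π/4), (3π/4, π/4), (−3π/4, −π/4)`: there are exactly four perfect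
quantum protractors of this form for spin 1. -/
theorem spin_one_protractor_iff (φp φm : ℝ) :
    (∀ A ∈ ({J1x, J1y, J1z} : Set (Matrix (Fin 3) (Fin 3) ℂ)),
      ∀ (t : ℂ) (v : Fin 3 → ℂ), A.mulVec v = t • v → (∑ i, ‖v i‖ ^ 2 = 1) →
        ‖∑ i, star (v i) * ψspin1 φp φm i‖ ^ 2 = 1 / 3) ↔
    (∃ a b : ℤ,
      (φp = Real.pi / 4 + 2 * Real.pi * a ∧ φm = 3 * Real.pi / 4 + 2 * Real.pi * b) ∨
      (φp = -(Real.pi / 4) + 2 * Real.pi * a ∧ φm = -(3 * Real.pi / 4) + 2 * Real.pi * b) ∨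
      (φp = 3 * Real.pi / 4 + 2 * Real.pi * a ∧ φm = Real.pi / 4 + 2 * Real.pi * b) ∨
      (φp = -(3 * Real.pi / 4) + 2 * Real.pi * a ∧ φm = -(Real.pi / 4) + 2 * Real.pi * b)) := by
  rw [show (1 / 3 : ℝ) = 1 / Fintype.card (Fin 3) by simp]
  simp only [Set.mem_insert_iff, Set.mem_singleton_iff, forall_eq_or_imp, forall_eq]
  change IsUnbiasedIn J1x _ ∧ IsUnbiasedIn J1y _ ∧ IsUnbiasedIn J1z _ ↔ _
  rw [isUnbiasedIn_J1x_ψspin1_iff, isUnbiasedIn_J1y_ψspin1_iff,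
    iff_true_intro (isUnbiasedIn_J1z_ψspin1 φp φm), and_true,
    spin_one_unbiasedness_equations_iff (Real.cos_sq_add_sin_sq φp) (Real.sq_sqrt zero_le_two)]
  exact cos_eq_neg_cos_and_sin_eq_sin_and_sin_sq_eq_half_iff φp φm

end
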